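/- With the triplet-constrained objective Q_ROSIA(R) = Σ_i max_j ([∠(R s_i, c_j) ≤ α_ε] · Π_{k=1}^K [|θ_k^{(i)} − φ_k^{(j)}| ≤ 2α_ε]) and bound Q̄_ROSIA(B) = Σ_i max_j ([∠(R_u s_i, c_j) ≤ α_ε + α_B] · Π_{k=1}^K [|θ_k^{(i)} − φ_k^{(j)}| ≤ 2α_ε]), for any cube B with center u and half-diagonal α_B one has Q̄_ROSIA(B) ≥ max_{r ∈ B} Q_ROSIA(R_r). -/

import Mathlib

open scoped Matrix
open InnerProductGeometry
noncomputable section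

abbrev E3 := EuclideanSpace ℝ (Fin 3)

/-- Skew-symmetric cross-product matrix of `r`. -/
def skew (r : E3) : Matrix (Fin 3) (Fin 3) ℝ :=
  !![0, -r 2, r 1; r 2, 0, -r 0; -r 1, r 0, 0]

attribute [local instance] Matrix.linftyOpNormedRing Matrix.linftyOpNormedAlgebra in
/-- Axis-angle (exponential) map: rotation by angle `‖r‖` about axis `r/‖r‖`. -/
def axisAngleRot (r : E3) : Matrix (Fin 3) (Fin 3) ℝ :=
  NormedSpace.exp (skew r)

/-- Action of a `3×3` matrix on a vector of `EuclideanSpace ℝ (Fin 3)`. -/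
def rotApply (R : Matrix (Fin 3) (Fin 3) ℝ) (s : E3) : E3 :=
  (EuclideanSpace.equiv (Fin 3) ℝ).symm (R.mulVec (EuclideanSpace.equiv (Fin 3) ℝ s))

/-!
For a unit vector `s`, the map `r ↦ R_r s` is `1`-Lipschitz: along `τ ↦ exp(τ [x]ₓ) exp((1-τ) [y]ₓ) s`
the velocity is `exp(τ [x]ₓ) ((x - y) × exp((1-τ) [y]ₓ) s)`, of norm at most `‖x - y‖` because the
exponentials are orthogonal. A Lipschitz path on the unit sphere sweeps an angle at most its Lipschitz
constant (a chord of length `d` subtends the angle `2 arcsin (d / 2)`, and `n · 2 arcsin (L / 2n) → L`),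
so `∠(R_u s, R_r s) ≤ ‖r - u‖ ≤ α_B`. The triangle inequality for angles then turns
`∠(R_r s_i, c_j) ≤ α_ε` into `∠(R_u s_i, c_j) ≤ α_ε + α_B`, termwise in both sums.
-/

open Real Filter Topology
open scoped NNReal

section UnitVectors

variable {V : Type*} [NormedAddCommGroup V] [InnerProductSpace ℝ V]

theorem angle_eq_two_mul_arcsin_of_norm_eq_one {x y : V} (hx : ‖x‖ = 1) (hy : ‖y‖ = 1) :
    angle x y = 2 * arcsin (‖x - y‖ / 2) := by
  have hcos := norm_sub_sq_eq_norm_sq_add_norm_sq_sub_two_mul_norm_mul_norm_mul_cos_angle x y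
  rw [hx, hy] at hcos
  have hθ₀ := angle_nonneg x y
  have hθπ := angle_le_pi x y
  have hsin : ‖x - y‖ / 2 = sin (angle x y / 2) := by
    have hsq : (‖x - y‖ / 2) ^ 2 = sin (angle x y / 2) ^ 2 := by
      rw [div_pow, sq, hcos, sin_sq_eq_half_sub, mul_div_cancel₀ _ two_ne_zero]; ring
    exact (pow_left_inj₀ (by positivity) (sin_nonneg_of_nonneg_of_le_pi (by linarith)
      (by linarith)) two_ne_zero).1 hsq
  rw [hsin, arcsin_sin] <;> linarith

theorem tendsto_inv_mul_two_mul_arcsin (L : ℝ) :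
    Tendsto (fun δ : ℝ => δ⁻¹ * (2 * arcsin (L * δ / 2))) (𝓝[≠] 0) (𝓝 L) := by
  have hderiv : HasDerivAt (fun δ : ℝ => 2 * arcsin (L * δ / 2)) L 0 := by
    have := (hasDerivAt_arcsin (x := L * 0 / 2) (by norm_num) (by norm_num)).comp (0 : ℝ)
      (((hasDerivAt_id (0 : ℝ)).const_mul L).div_const 2)
    exact (this.const_mul 2).congr_deriv (by norm_num; ring)
  simpa using hasDerivAt_iff_tendsto_slope_zero.1 hderiv

theorem LipschitzWith.angle_le_of_norm_eq_one {E : Type*} [NormedAddCommGroup E]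
    [NormedSpace ℝ E] {f : E → V} {K : ℝ≥0} (hf : LipschitzWith K f) (hf1 : ∀ x, ‖f x‖ = 1)
    (x y : E) : angle (f x) (f y) ≤ K * ‖x - y‖ := by
  set L := K * ‖x - y‖
  set g : ℝ → V := fun t => f (x + t • (y - x))
  have hstep (t δ : ℝ) (hδ : 0 ≤ δ) : angle (g t) (g (t + δ)) ≤ 2 * arcsin (L * δ / 2) := by
    have hchord : ‖g t - g (t + δ)‖ ≤ L * δ := by
      have := hf.dist_le_mul (x + (t + δ) • (y - x)) (x + t • (y - x))
      rw [dist_eq_norm, dist_eq_norm, add_sub_add_left_eq_sub, ← sub_smul, add_sub_cancel_left,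
        norm_smul, Real.norm_of_nonneg hδ, norm_sub_rev y x] at this
      calc ‖g t - g (t + δ)‖ = ‖g (t + δ) - g t‖ := norm_sub_rev _ _
        _ ≤ K * (δ * ‖x - y‖) := this
        _ = L * δ := by ring
    rw [angle_eq_two_mul_arcsin_of_norm_eq_one (hf1 _) (hf1 _)]
    gcongr
  have hchain (δ : ℝ) (hδ : 0 ≤ δ) (m : ℕ) :
      angle (g 0) (g (m * δ)) ≤ m * (2 * arcsin (L * δ / 2)) := by
    induction m with
    | zero => simp [g, angle_self (norm_ne_zero_iff.1 ((hf1 x).trans_ne one_ne_zero))]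
    | succ m ih =>
      rw [Nat.cast_succ, add_one_mul, add_one_mul]
      calc angle (g 0) (g (m * δ + δ))
          ≤ angle (g 0) (g (m * δ)) + angle (g (m * δ)) (g (m * δ + δ)) :=
            angle_le_angle_add_angle _ _ _
        _ ≤ m * (2 * arcsin (L * δ / 2)) + 2 * arcsin (L * δ / 2) := by
            gcongr; exact hstep _ _ hδ
  have hδ : Tendsto (fun n : ℕ => 1 / ((n : ℝ) + 1)) atTop (𝓝[≠] 0) :=
    tendsto_nhdsWithin_iff.2 ⟨tendsto_one_div_add_atTop_nhds_zero_nat,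
      Eventually.of_forall fun n => Set.mem_compl_singleton_iff.2 (by positivity)⟩
  refine ge_of_tendsto ((tendsto_inv_mul_two_mul_arcsin L).comp hδ)
    (Eventually.of_forall fun n => ?_)
  have hn : ((n : ℝ) + 1) ≠ 0 := Nat.cast_add_one_ne_zero n
  simpa [g, hn] using hchain (1 / ((n : ℝ) + 1)) (by positivity) (n + 1)

end UnitVectors

section ExpPath

variable {𝔸 : Type*} [NormedRing 𝔸] [NormedAlgebra ℝ 𝔸] [CompleteSpace 𝔸]

theorem hasDerivAt_exp_smul_mul_exp_one_sub_smul (X Y : 𝔸) (τ : ℝ) :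
    HasDerivAt (fun τ : ℝ => NormedSpace.exp (τ • X) * NormedSpace.exp ((1 - τ) • Y))
      (NormedSpace.exp (τ • X) * (X - Y) * NormedSpace.exp ((1 - τ) • Y)) τ := by
  have hX := hasDerivAt_exp_smul_const X τ
  have hY := (hasDerivAt_exp_smul_const Y (1 - τ)).scomp τ ((hasDerivAt_id τ).const_sub 1)
  refine (hX.mul hY).congr_deriv ?_
  have hcomm : Commute (NormedSpace.exp ((1 - τ) • Y)) Y :=
    ((Commute.refl Y).smul_left (1 - τ)).exp_left
  rw [Function.comp_apply, neg_one_smul, hcomm.eq]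
  noncomm_ring

end ExpPath

section AxisAngle

theorem skew_smul (a : ℝ) (v : E3) : skew (a • v) = a • skew v := by
  ext i j; fin_cases i <;> fin_cases j <;> simp [skew]

theorem skew_sub (x y : E3) : skew (x - y) = skew x - skew y := by
  ext i j; fin_cases i <;> fin_cases j <;> simp [skew] <;> ring

theorem skew_transpose (v : E3) : (skew v)ᵀ = -skew v := by
  ext i j; fin_cases i <;> fin_cases j <;> simp [skew]

theorem ofLp_rotApply (A : Matrix (Fin 3) (Fin 3) ℝ) (s : E3) :
    (rotApply A s).ofLp = A *ᵥ s.ofLp := rfl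

theorem rotApply_mul (A B : Matrix (Fin 3) (Fin 3) ℝ) (s : E3) :
    rotApply (A * B) s = rotApply A (rotApply B s) :=
  WithLp.ofLp_injective 2 <| by simp only [ofLp_rotApply, Matrix.mulVec_mulVec]

theorem rotApply_skew (v w : E3) : rotApply (skew v) w = WithLp.toLp 2 (v.ofLp ⨯₃ w.ofLp) := by
  ext i
  fin_cases i <;>
    simp [ofLp_rotApply, skew, cross_apply, Matrix.mulVec, dotProduct, Fin.sum_univ_three] <;> ring

theorem norm_rotApply_skew_le (v w : E3) : ‖rotApply (skew v) w‖ ≤ ‖v‖ * ‖w‖ := by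
  have hsq : ‖rotApply (skew v) w‖ ^ 2 = ‖v‖ ^ 2 * ‖w‖ ^ 2 - inner ℝ v w ^ 2 := by
    simp only [← real_inner_self_eq_norm_sq, rotApply_skew,
      EuclideanSpace.inner_eq_star_dotProduct, star_trivial, cross_dot_cross]
    rw [dotProduct_comm v.ofLp w.ofLp]; ring
  rw [← sq_le_sq₀ (norm_nonneg _) (by positivity), hsq, mul_pow]
  linarith [sq_nonneg (inner ℝ v w)]

theorem norm_rotApply_of_transpose_mul_self {U : Matrix (Fin 3) (Fin 3) ℝ} (hU : Uᵀ * U = 1)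
    (w : E3) : ‖rotApply U w‖ = ‖w‖ := by
  rw [← sq_eq_sq₀ (norm_nonneg _) (norm_nonneg _), ← real_inner_self_eq_norm_sq,
    ← real_inner_self_eq_norm_sq]
  simp only [EuclideanSpace.inner_eq_star_dotProduct, star_trivial, ofLp_rotApply]
  rw [Matrix.dotProduct_mulVec, ← Matrix.mulVec_transpose, Matrix.mulVec_mulVec, hU,
    Matrix.one_mulVec]

theorem axisAngleRot_transpose_mul_self (v : E3) : (axisAngleRot v)ᵀ * axisAngleRot v = 1 := by
  rw [axisAngleRot, ← Matrix.exp_transpose, skew_transpose,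
    ← Matrix.exp_add_of_commute _ _ (Commute.refl (skew v)).neg_left, neg_add_cancel,
    NormedSpace.exp_zero]

theorem norm_rotApply_axisAngleRot (v w : E3) : ‖rotApply (axisAngleRot v) w‖ = ‖w‖ :=
  norm_rotApply_of_transpose_mul_self (axisAngleRot_transpose_mul_self v) w

section MatrixNorm

-- Any norm on matrices would do: it only fixes the topology for the calculus below.
attribute [local instance] Matrix.linftyOpNormedRing Matrix.linftyOpNormedAlgebra

def rotApplyCLM (s : E3) : Matrix (Fin 3) (Fin 3) ℝ →L[ℝ] E3 :=
  LinearMap.toContinuousLinearMap ((EuclideanSpace.equiv (Fin 3) ℝ).symm.toLinearMap ∘ₗ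
    (Matrix.mulVecBilin ℝ ℝ).flip (EuclideanSpace.equiv (Fin 3) ℝ s))

theorem rotApplyCLM_apply (s : E3) (A : Matrix (Fin 3) (Fin 3) ℝ) :
    rotApplyCLM s A = rotApply A s := rfl

theorem norm_rotApply_axisAngleRot_sub_le (x y s : E3) :
    ‖rotApply (axisAngleRot x) s - rotApply (axisAngleRot y) s‖ ≤ ‖x - y‖ * ‖s‖ := by
  set h : ℝ → E3 := fun τ =>
    rotApplyCLM s (NormedSpace.exp (τ • skew x) * NormedSpace.exp ((1 - τ) • skew y))
  have hderiv (τ : ℝ) : HasDerivAt h (rotApplyCLM s (NormedSpace.exp (τ • skew x) *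
      (skew x - skew y) * NormedSpace.exp ((1 - τ) • skew y))) τ :=
    (rotApplyCLM s).hasFDerivAt.comp_hasDerivAt τ
      (hasDerivAt_exp_smul_mul_exp_one_sub_smul (skew x) (skew y) τ)
  have hbound (τ : ℝ) : ‖rotApplyCLM s (NormedSpace.exp (τ • skew x) *
      (skew x - skew y) * NormedSpace.exp ((1 - τ) • skew y))‖ ≤ ‖x - y‖ * ‖s‖ := by
    rw [rotApplyCLM_apply, rotApply_mul, rotApply_mul, ← skew_sub, ← skew_smul, ← skew_smul,
      ← axisAngleRot, ← axisAngleRot, norm_rotApply_axisAngleRot]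
    calc _ ≤ ‖x - y‖ * ‖rotApply (axisAngleRot ((1 - τ) • y)) s‖ := norm_rotApply_skew_le _ _
      _ = ‖x - y‖ * ‖s‖ := by rw [norm_rotApply_axisAngleRot]
  have := norm_image_sub_le_of_norm_deriv_le_segment' (fun τ _ => (hderiv τ).hasDerivWithinAt)
    (fun τ _ => hbound τ) 1 (Set.right_mem_Icc.2 zero_le_one)
  simpa [h, rotApplyCLM_apply, axisAngleRot] using this

end MatrixNorm

theorem lipschitzWith_rotApply_axisAngleRot (s : E3) :
    LipschitzWith ‖s‖₊ fun r => rotApply (axisAngleRot r) s :=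
  LipschitzWith.of_dist_le_mul fun x y => by
    simpa [dist_eq_norm, mul_comm] using norm_rotApply_axisAngleRot_sub_le x y s

theorem angle_rotApply_axisAngleRot_le (x y : E3) {s : E3} (hs : ‖s‖ = 1) :
    angle (rotApply (axisAngleRot x) s) (rotApply (axisAngleRot y) s) ≤ ‖x - y‖ := by
  simpa [hs] using (lipschitzWith_rotApply_axisAngleRot s).angle_le_of_norm_eq_one
    (fun r => (norm_rotApply_axisAngleRot r s).trans hs) x y

end AxisAngle

theorem upper_bound_Q_ROSIA_general (N M K : ℕ) (s : Fin N → E3) (c : Fin M → E3)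
    (hs : ∀ i, ‖s i‖ = 1)
    (θ : Fin N → Fin K → ℝ) (φv : Fin M → Fin K → ℝ)
    (αε : ℝ)
    (B : Set E3) (u : E3) (αB : ℝ) (hB : ∀ r ∈ B, ‖r - u‖ ≤ αB) :
    ∀ r ∈ B,
      (∑ i : Fin N, Finset.univ.sup fun j : Fin M =>
          (if angle (rotApply (axisAngleRot r) (s i)) (c j) ≤ αε then (1 : ℕ) else 0) *
            ∏ k : Fin K, if |θ i k - φv j k| ≤ 2 * αε then (1 : ℕ) else 0) ≤
      ∑ i : Fin N, Finset.univ.sup fun j : Fin M =>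
          (if angle (rotApply (axisAngleRot u) (s i)) (c j) ≤ αε + αB then (1 : ℕ) else 0) *
            ∏ k : Fin K, if |θ i k - φv j k| ≤ 2 * αε then (1 : ℕ) else 0 := by
  intro r hr
  refine Finset.sum_le_sum fun i _ => Finset.sup_mono_fun fun j _ => Nat.mul_le_mul_right _ ?_
  have hrot : angle (rotApply (axisAngleRot u) (s i)) (rotApply (axisAngleRot r) (s i)) ≤ αB :=
    (angle_rotApply_axisAngleRot_le u r (hs i)).trans (norm_sub_rev u r ▸ hB r hr)
  by_cases hr_close : angle (rotApply (axisAngleRot r) (s i)) (c j) ≤ αε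
  · have hu_close : angle (rotApply (axisAngleRot u) (s i)) (c j) ≤ αε + αB := by
      linarith [angle_le_angle_add_angle (rotApply (axisAngleRot u) (s i))
        (rotApply (axisAngleRot r) (s i)) (c j)]
    rw [if_pos hr_close, if_pos hu_close]
  · rw [if_neg hr_close]
    exact Nat.zero_le _

/-- The triplet-constrained bound `Q̄_ROSIA(B)` dominates `Q_ROSIA(R_r)` for every `r` in the
cube `B`, i.e. `Q̄_ROSIA(B) ≥ max_{r ∈ B} Q_ROSIA(R_r)`. -/
theorem upper_bound_Q_ROSIA (N M K : ℕ) (s : Fin N → E3) (c : Fin M → E3)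
    (hs : ∀ i, ‖s i‖ = 1) (hc : ∀ j, ‖c j‖ = 1)
    (θ : Fin N → Fin K → ℝ) (φv : Fin M → Fin K → ℝ)
    (αε : ℝ) (hαε : 0 < αε)
    (B : Set E3) (u : E3) (αB : ℝ) (hB : ∀ r ∈ B, ‖r - u‖ ≤ αB) :
    ∀ r ∈ B,
      (∑ i : Fin N, Finset.univ.sup fun j : Fin M =>
          (if angle (rotApply (axisAngleRot r) (s i)) (c j) ≤ αε then (1 : ℕ) else 0) *
            ∏ k : Fin K, if |θ i k - φv j k| ≤ 2 * αε then (1 : ℕ) else 0) ≤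
      ∑ i : Fin N, Finset.univ.sup fun j : Fin M =>
          (if angle (rotApply (axisAngleRot u) (s i)) (c j) ≤ αε + αB then (1 : ℕ) else 0) *
            ∏ k : Fin K, if |θ i k - φv j k| ≤ 2 * αε then (1 : ℕ) else 0 :=
  upper_bound_Q_ROSIA_general N M K s c hs θ φv αε B u αB hB
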